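/- Fix real numbers c > 0 and b > 0, and take N = 3; for each δz ∈ (0,2) set δv = b·δz² and let W(δz) = X⁻¹Y be the resulting 2×2 matrix of the fully discrete scheme. Then there exists δ₀ ∈ (0,2) such that for every δz with 0 < δz < δ₀, every complex eigenvalue ρ of W(δz) has positive real part. -/
import Mathlib

lemma quad_pos_re (a s q : ℝ) (ha : 0 < a) (hs : 0 < s) (hq : 0 < q) (ρ : ℂ)
    (h : (a:ℂ) * ρ ^ 2 - s * ρ + q = 0) : 0 < ρ.re := by
  rw [Complex.ext_iff] at h
  obtain ⟨h1, h2⟩ := h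
  simp [Complex.add_re, Complex.add_im, Complex.sub_re, Complex.sub_im, Complex.mul_re,
    Complex.mul_im, pow_two] at h1 h2
  by_cases hy : ρ.im = 0
  · rw [hy] at h1
    by_contra hx
    push_neg at hx
    nlinarith
  · have hx : a * (2 * ρ.re) = s := by
      have h3 : ρ.im * (a * (2 * ρ.re) - s) = 0 := by nlinarith
      rcases mul_eq_zero.mp h3 with h | h
      · exact absurd h hy
      · linarith
    nlinarith

/-- For `N = 3`, the `2 × 2` matrix `W(δz) = X⁻¹ Y` of the fully discrete scheme,
where `δv = b·δz²`. -/
noncomputable def W3 (c b δz : ℝ) : Matrix (Fin 2) (Fin 2) ℝ :=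
  (!![5 / (6 * (b * δz ^ 2)), (2 - δz) / (24 * (b * δz ^ 2));
      (2 + δz) / (24 * (b * δz ^ 2)), 5 / (6 * (b * δz ^ 2))])⁻¹ *
    !![(c + c * δz ^ 2 / 12) / δz ^ 2,
        c / (4 * δz) - (c + c * δz ^ 2 / 12) / (2 * δz ^ 2);
       -(c / (4 * δz)) - (c + c * δz ^ 2 / 12) / (2 * δz ^ 2),
        (c + c * δz ^ 2 / 12) / δz ^ 2]

/-- for `N = 3` and `δv = b·δz²`, there is `δ₀ ∈ (0,2)` such that for
all `0 < δz < δ₀`, every complex eigenvalue of `W(δz)` has positive real part. -/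
theorem stmt8 (c b : ℝ) (hc : 0 < c) (hb : 0 < b) :
    ∃ δ₀ ∈ Set.Ioo (0 : ℝ) 2, ∀ δz : ℝ, 0 < δz → δz < δ₀ →
      ∀ ρ : ℂ, ρ ∈ spectrum ℂ ((W3 c b δz).map Complex.ofReal) → 0 < ρ.re := by
  refine ⟨1, ⟨one_pos, one_lt_two⟩, fun δz hδz hδz1 ρ hρ => ?_⟩
  set v : ℝ := b * δz ^ 2 with hv
  have hv0 : 0 < v := by positivity
  set X : Matrix (Fin 2) (Fin 2) ℝ :=
    !![5 / (6 * v), (2 - δz) / (24 * v); (2 + δz) / (24 * v), 5 / (6 * v)] with hX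
  set Y : Matrix (Fin 2) (Fin 2) ℝ :=
    !![(c + c * δz ^ 2 / 12) / δz ^ 2,
        c / (4 * δz) - (c + c * δz ^ 2 / 12) / (2 * δz ^ 2);
       -(c / (4 * δz)) - (c + c * δz ^ 2 / 12) / (2 * δz ^ 2),
        (c + c * δz ^ 2 / 12) / δz ^ 2] with hY
  have hW3 : W3 c b δz = X⁻¹ * Y := rfl
  -- determinant of X
  have hdetX : X.det = (396 + δz ^ 2) / (576 * v ^ 2) := by
    rw [hX, Matrix.det_fin_two_of]
    field_simp
    ring
  have hdetX0 : IsUnit X.det := by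
    rw [hdetX]
    exact (isUnit_iff_ne_zero).mpr (by positivity)
  -- from spectrum membership, get det (ρ • Xℂ - Yℂ) = 0
  rw [spectrum.mem_iff] at hρ
  have hdet0 : (algebraMap ℂ (Matrix (Fin 2) (Fin 2) ℂ) ρ - (W3 c b δz).map Complex.ofReal).det = 0 := by
    by_contra hne
    exact hρ ((Matrix.isUnit_iff_isUnit_det _).mpr (isUnit_iff_ne_zero.mpr hne))
  set Xc : Matrix (Fin 2) (Fin 2) ℂ := X.map Complex.ofReal with hXc
  set Yc : Matrix (Fin 2) (Fin 2) ℂ := Y.map Complex.ofReal with hYc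
  have hmul : Xc * ((W3 c b δz).map Complex.ofReal) = Yc := by
    have h1 : Xc * ((W3 c b δz).map Complex.ofReal) = (X * W3 c b δz).map Complex.ofReal := by
      rw [hXc]
      exact (Matrix.map_mul (f := Complex.ofRealHom)).symm
    rw [h1, hW3, ← Matrix.mul_assoc, Matrix.mul_nonsing_inv X hdetX0, Matrix.one_mul]
  have key : (ρ • Xc - Yc).det = 0 := by
    have : ρ • Xc - Yc = Xc * (algebraMap ℂ (Matrix (Fin 2) (Fin 2) ℂ) ρ - (W3 c b δz).map Complex.ofReal) := by
      rw [Matrix.mul_sub, hmul, Algebra.algebraMap_eq_smul_one, Matrix.mul_smul, Matrix.mul_one]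
    rw [this, Matrix.det_mul, hdet0, mul_zero]
  -- expand the determinant
  set A : ℝ := (c + c * δz ^ 2 / 12) / δz ^ 2 with hA
  set B : ℝ := c / (4 * δz) - (c + c * δz ^ 2 / 12) / (2 * δz ^ 2) with hB
  set C : ℝ := -(c / (4 * δz)) - (c + c * δz ^ 2 / 12) / (2 * δz ^ 2) with hC
  have hexp : (ρ * (5 / (6 * v)) - A) * (ρ * (5 / (6 * v)) - A)
      - (ρ * ((2 - δz) / (24 * v)) - B) * (ρ * ((2 + δz) / (24 * v)) - C) = 0 := by
    have := key
    rw [Matrix.det_fin_two] at this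
    simp only [Matrix.sub_apply, Matrix.smul_apply, Matrix.map_apply, hXc, hYc, hX, hY,
      Matrix.cons_val', Matrix.cons_val_zero, Matrix.cons_val_one, Matrix.head_cons,
      Matrix.empty_val', Matrix.cons_val_fin_one, Matrix.head_fin_const, Matrix.of_apply,
      smul_eq_mul] at this
    push_cast at this ⊢
    linear_combination this
  -- the real quadratic coefficients
  set a : ℝ := (396 + δz ^ 2) / (576 * v ^ 2) with ha'
  set s : ℝ := (84 * c + 6 * c * δz ^ 2) / (48 * v * δz ^ 2) with hs'
  set q : ℝ := 3 / 4 * A ^ 2 + c ^ 2 / (16 * δz ^ 2) with hq'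
  have ha : 0 < a := by rw [ha']; positivity
  have hs : 0 < s := by rw [hs']; positivity
  have hq : 0 < q := by rw [hq']; positivity
  have hquad : (a : ℂ) * ρ ^ 2 - s * ρ + q = 0 := by
    have ea : (a : ℝ) = (5 / (6 * v)) * (5 / (6 * v)) - ((2 - δz) / (24 * v)) * ((2 + δz) / (24 * v)) := by
      rw [ha']; field_simp; ring
    have es : (s : ℝ) = 2 * (5 / (6 * v)) * A - ((2 - δz) / (24 * v)) * C - ((2 + δz) / (24 * v)) * B := by
      rw [hs', hA, hB, hC]; field_simp; ring
    have eq' : (q : ℝ) = A * A - B * C := by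
      rw [hq', hA, hB, hC]; field_simp; ring
    rw [ea, es, eq']
    push_cast
    linear_combination hexp
  exact quad_pos_re a s q ha hs hq ρ hquad
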